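/- arXiv:2305.09971 — 2 statements merged into one kernel-verified Lean document; each statement's English description precedes it below -/
import Mathlib

section
/- For m ≥ 3 and n ≥ 1, the number of random walk labelings of the (m,n)-tadpole graph is L(T_{m,n}) = 2^{m-2}\left(\binom{m+n}{n+1} + \sum_{k=0}^{n-1}\binom{m+n-1}{k+m}\right). -/
/-!
Write `w` for the free end of the path. Deleting `w` from a labeling in which it has position `i`
gives a labeling of the tadpole with a shorter path in which the neighbour of `w` has some position
`j < max i 1`, and every such labeling arises exactly once. So the number `b_n(i)` of labelings
placing `w` at position `i` obeys `b_{n+1}(i) = ∑_{j < max i 1} b_n(j)`, where `b_0(i)` counts the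
labelings of `C_m` placing the attachment vertex at position `i`. By rotation `b_0(i)` does not
depend on the vertex, so it equals the number of labelings of `C_m` ending at a fixed vertex `v`,
that is `L(C_m - v)`; since `C_m - v` is a path, the same recursion started from a single vertex
gives `b_0 = 2^(m-2)`. Solving the recursion for constant `b_0` and summing over `i` gives the
formula.
-/

open Finset

/-- A sequence of `k` distinct vertices of `G` such that every vertex other than the
first is adjacent to some earlier vertex (a random walk labeling disrupted after the
`k`-th vertex). -/
def IsRWLPrefix {V : Type*} (G : SimpleGraph V) {k : ℕ} (v : Fin k → V) : Prop :=
  Function.Injective v ∧ ∀ i : Fin k, i.val ≠ 0 → ∃ j : Fin k, j < i ∧ G.Adj (v j) (v i)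

/-- `L_k(G)`: the number of random walk labelings of `G` disrupted after the `k`-th
vertex.  For `k = 0` this equals `1` (the empty sequence). -/
noncomputable def rwlPrefixCount {V : Type*} (G : SimpleGraph V) (k : ℕ) : ℕ :=
  Nat.card {v : Fin k → V // IsRWLPrefix G v}

/-- `L(G)`: the number of random walk labelings of `G`, i.e. orderings of all the
vertices of `G` in which every vertex other than the first is adjacent to some
earlier vertex. -/
noncomputable def rwlCount {V : Type*} (G : SimpleGraph V) [Fintype V] : ℕ :=
  rwlPrefixCount G (Fintype.card V)

/-- The graph obtained from the disjoint union of `G` and `H` by joining the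
vertex `a` of `G` to the vertex `b` of `H` by an edge (a bridge). -/
def bridgeJoin {V W : Type*} (G : SimpleGraph V) (H : SimpleGraph W) (a : V) (b : W) :
    SimpleGraph (V ⊕ W) :=
  SimpleGraph.fromRel (fun x y =>
    match x, y with
    | Sum.inl u, Sum.inl v => G.Adj u v
    | Sum.inr u, Sum.inr v => H.Adj u v
    | Sum.inl u, Sum.inr v => u = a ∧ v = b
    | Sum.inr _, Sum.inl _ => False)

open SimpleGraph Function

theorem card_subtype_eq_sum_of_existsUnique {α ι : Type*} [Finite α] [Fintype ι]
    {P : α → Prop} (Q : ι → α → Prop) (h : ∀ a, P a → ∃! i, Q i a) :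
    Nat.card {a // P a} = ∑ i, Nat.card {a // P a ∧ Q i a} := by
  rw [← Nat.card_sigma]
  refine Nat.card_congr
    ⟨fun a => ⟨(h a.1 a.2).exists.choose, a.1, a.2, (h a.1 a.2).exists.choose_spec⟩,
      fun s => ⟨s.2.1, s.2.2.1⟩, fun _ => rfl, fun ⟨i, a, ha, hi⟩ => ?_⟩
  obtain rfl : (h a ha).exists.choose = i := (h a ha).unique (h a ha).exists.choose_spec hi
  rfl

theorem Fin.insertNth_injective {α : Type*} {N : ℕ} {x : Fin N → α} (hx : Injective x)
    {a : α} (ha : a ∉ Set.range x) (i : Fin (N + 1)) : Injective (i.insertNth a x) := by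
  intro p q h
  rcases Fin.eq_self_or_eq_succAbove i p with hp | ⟨p, rfl⟩ <;>
    rcases Fin.eq_self_or_eq_succAbove i q with hq | ⟨q, rfl⟩
  · exact hp.trans hq.symm
  · subst hp
    simp only [Fin.insertNth_apply_same, Fin.insertNth_apply_succAbove] at h
    exact absurd ⟨q, h.symm⟩ ha
  · subst hq
    simp only [Fin.insertNth_apply_same, Fin.insertNth_apply_succAbove] at h
    exact absurd ⟨p, h⟩ ha
  · simp only [Fin.insertNth_apply_succAbove] at h
    rw [hx h]

theorem sum_range_choose_eq_choose_succ (t : ℕ) :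
    ∀ K, ∑ k ∈ range K, k.choose t = K.choose (t + 1)
  | 0 => by simp
  | K + 1 => by
    rw [sum_range_succ, sum_range_choose_eq_choose_succ t K, Nat.choose_succ_succ', add_comm]

theorem sum_range_choose_sub_eq_choose_succ {N : ℕ} (hN : 0 < N) (t : ℕ) :
    ∀ K, ∑ k ∈ range K, (k + 1 - N).choose (t + 1) = (K + 1 - N).choose (t + 2)
  | 0 => by simp [Nat.sub_eq_zero_of_le hN]
  | K + 1 => by
    rw [sum_range_succ, sum_range_choose_sub_eq_choose_succ hN t K]
    rcases le_or_gt N (K + 1) with h | h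
    · rw [show K + 1 + 1 - N = K + 1 - N + 1 by omega, Nat.choose_succ_succ' (K + 1 - N),
        add_comm]
    · simp [Nat.sub_eq_zero_of_le h.le, Nat.sub_eq_zero_of_le (Nat.succ_le_of_lt h)]

theorem sum_range_choose_eq_choose_add_sum {m : ℕ} (hm : 0 < m) (n : ℕ) :
    ∑ t ∈ range (n + 2), (m + n - 1).choose t =
      (m + n).choose (n + 1) + ∑ k ∈ range n, (m + n - 1).choose (k + m) := by
  obtain ⟨K, hK⟩ : ∃ K, m + n = K + 1 := ⟨m + n - 1, by omega⟩
  rw [hK, Nat.add_sub_cancel, sum_range_succ, sum_range_succ, add_assoc,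
    ← Nat.choose_succ_succ', add_comm, ← sum_range_reflect]
  congr 1
  refine sum_congr rfl fun k hk => ?_
  rw [mem_range] at hk
  rw [← Nat.choose_symm (by omega)]
  congr 1
  omega

noncomputable def rwlPosCount {V : Type*} (G : SimpleGraph V) (N : ℕ) (u : V) (i : Fin N) :
    ℕ :=
  Nat.card {v : Fin N → V // IsRWLPrefix G v ∧ v i = u}

section Counting

variable {V V' : Type*} {G : SimpleGraph V} {G' : SimpleGraph V'}

theorem isRWLPrefix_comp_iff (f : G' ↪g G) {k : ℕ} {v : Fin k → V'} :
    IsRWLPrefix G (f ∘ v) ↔ IsRWLPrefix G' v := by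
  simp only [IsRWLPrefix, comp_apply, f.map_adj_iff, f.injective.of_comp_iff]

theorem rwlPosCount_congr (e : G ≃g G') (N : ℕ) (u : V) (i : Fin N) :
    rwlPosCount G N u i = rwlPosCount G' N (e u) i :=
  Nat.card_congr <| (Equiv.arrowCongr (Equiv.refl _) e.toEquiv).subtypeEquiv fun _ =>
    (isRWLPrefix_comp_iff e.toEmbedding).symm.and e.injective.eq_iff.symm

theorem rwlPrefixCount_eq_sum_rwlPosCount [Fintype V] {N : ℕ} (i : Fin N) :
    rwlPrefixCount G N = ∑ u, rwlPosCount G N u i :=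
  card_subtype_eq_sum_of_existsUnique (fun u (v : Fin N → V) => v i = u) fun _ _ =>
    existsUnique_eq'

theorem rwlCount_eq_sum_rwlPosCount [Fintype V] {N : ℕ} (hN : Fintype.card V = N) (u : V) :
    rwlCount G = ∑ i : Fin N, rwlPosCount G N u i := by
  subst hN
  refine card_subtype_eq_sum_of_existsUnique (fun i (v : Fin _ → V) => v i = u) fun v hv => ?_
  have hbij : Bijective v := (Fintype.bijective_iff_injective_and_card v).2 ⟨hv.1, by simp⟩
  exact hbij.existsUnique u

end Counting

section Deletion

variable {V V' : Type*} {G : SimpleGraph V} {G' : SimpleGraph V'} {w : V} {N : ℕ}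

theorem rwlPosCount_eq_card_insertNth (f : V' ↪ V) (hf : Set.range f = {w}ᶜ)
    (i : Fin (N + 1)) :
    rwlPosCount G (N + 1) w i =
      Nat.card {v : Fin N → V' // IsRWLPrefix G (i.insertNth w (f ∘ v))} := by
  symm
  refine Nat.card_congr (Equiv.ofBijective
    (fun v => ⟨i.insertNth w (f ∘ v.1), v.2, Fin.insertNth_apply_same ..⟩) ⟨?_, ?_⟩)
  · intro v₁ v₂ h
    simp only [Subtype.mk.injEq] at h
    exact Subtype.ext <| f.injective.comp_left <|
      Fin.insertNth_right_injective (α := fun _ => V) (p := i) w h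
  · rintro ⟨v, hv, hvi⟩
    have hmem (k : Fin N) : v (i.succAbove k) ∈ Set.range f := by
      rw [hf]
      exact fun h => Fin.succAbove_ne i k (hv.1 (h.trans hvi.symm))
    choose g hg using hmem
    have hgv : i.insertNth w (f ∘ g) = v := by
      rw [← hvi, show f ∘ g = i.removeNth v from funext hg]
      exact Fin.insertNth_self_removeNth i v
    exact ⟨⟨g, hgv ▸ hv⟩, Subtype.ext hgv⟩

theorem IsRWLPrefix.of_insertNth_pendant {u : V} (hw : ∀ x, G.Adj w x ↔ x = u)
    {x : Fin (N + 1) → V} {i : Fin (N + 2)} (h : IsRWLPrefix G (i.insertNth w x)) :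
    IsRWLPrefix G x ∧ ∃ j : Fin (N + 1), (j : ℕ) < max (i : ℕ) 1 ∧ x j = u := by
  set v : Fin (N + 2) → V := i.insertNth w x
  have hx (k : Fin (N + 1)) : v (i.succAbove k) = x k := Fin.insertNth_apply_succAbove ..
  have hvi : v i = w := Fin.insertNth_apply_same ..
  have hu : ∃ j : Fin (N + 1), (j : ℕ) < max (i : ℕ) 1 ∧ x j = u := by
    rcases eq_or_ne i 0 with rfl | hi
    · obtain ⟨s, hs, hadj⟩ := h.2 1 (by simp)
      obtain rfl : s = 0 := (Fin.lt_one_iff s).1 hs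
      exact ⟨0, by simp, (hx 0).symm.trans ((hw _).1 (hvi ▸ hadj))⟩
    · obtain ⟨s, hs, hadj⟩ := h.2 i (Fin.val_ne_zero_iff.2 hi)
      obtain ⟨j, rfl⟩ := Fin.exists_succAbove_eq hs.ne
      have hj := Fin.lt_def.1 ((Fin.succAbove_lt_iff_castSucc_lt i j).1 hs)
      rw [Fin.val_castSucc] at hj
      exact ⟨j, by omega, (hx j).symm.trans ((hw _).1 (hvi ▸ hadj.symm))⟩
  have hinj : Injective x :=
    Fin.insertNth_comp_succAbove i w x ▸ h.1.comp Fin.succAbove_right_injective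
  refine ⟨⟨hinj, fun k hk => ?_⟩, hu⟩
  obtain ⟨j, hj, hxj⟩ := hu
  obtain ⟨s, hs, hadj⟩ := h.2 (i.succAbove k) <| Fin.val_ne_zero_iff.2 <|
    (Fin.succAbove_pos i k (Fin.pos_iff_ne_zero.2 (Fin.val_ne_zero_iff.1 hk))).ne'
  rcases Fin.eq_self_or_eq_succAbove i s with rfl | ⟨s, rfl⟩
  · -- then `x k = u`, which sits before `w`, or right after it if `w` comes first
    rw [hvi, hx, hw, ← hxj] at hadj
    obtain rfl := hinj hadj
    have := Fin.le_def.1 ((Fin.lt_succAbove_iff_le_castSucc _ _).1 hs)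
    rw [Fin.val_castSucc] at this
    omega
  · exact ⟨s, Fin.succAbove_lt_succAbove_iff.1 hs, by rwa [hx, hx] at hadj⟩

theorem IsRWLPrefix.insertNth_pendant {u : V} (hw : ∀ x, G.Adj w x ↔ x = u)
    {x : Fin (N + 1) → V} (hx : IsRWLPrefix G x) (hwx : w ∉ Set.range x) {i : Fin (N + 2)}
    {j : Fin (N + 1)} (hj : (j : ℕ) < max (i : ℕ) 1) (hxj : x j = u) :
    IsRWLPrefix G (i.insertNth w x) := by
  set v : Fin (N + 2) → V := i.insertNth w x
  have hx' (k : Fin (N + 1)) : v (i.succAbove k) = x k := Fin.insertNth_apply_succAbove ..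
  have hvi : v i = w := Fin.insertNth_apply_same ..
  refine ⟨Fin.insertNth_injective hx.1 hwx i, fun t ht => ?_⟩
  rcases Fin.eq_self_or_eq_succAbove i t with rfl | ⟨k, rfl⟩
  · have hjt : j.castSucc < t := Fin.lt_def.2 (by rw [Fin.val_castSucc]; omega)
    refine ⟨t.succAbove j, (Fin.succAbove_lt_iff_castSucc_lt _ _).2 hjt, ?_⟩
    rw [hx', hvi, hxj]
    exact ((hw u).2 rfl).symm
  · rcases eq_or_ne (k : ℕ) 0 with hk | hk
    · obtain rfl : i = 0 := by
        by_contra hi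
        rw [Fin.eq_of_val_eq (j := 0) hk, Fin.succAbove_ne_zero_zero hi] at ht
        exact ht rfl
      obtain rfl : k = j := Fin.ext (hk.trans (by simpa using hj : (j : ℕ) = 0).symm)
      refine ⟨0, Fin.succ_pos k, ?_⟩
      rw [hx', hvi, hxj]
      exact (hw u).2 rfl
    · obtain ⟨k', hk', hadj⟩ := hx.2 k hk
      exact ⟨i.succAbove k', Fin.succAbove_lt_succAbove_iff.2 hk', by rwa [hx', hx']⟩

theorem isRWLPrefix_snoc_iff {x : Fin (N + 1) → V} (hwx : w ∉ Set.range x) :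
    IsRWLPrefix G (Fin.snoc x w : Fin (N + 2) → V) ↔
      IsRWLPrefix G x ∧ ∃ j, G.Adj (x j) w := by
  constructor
  · rintro ⟨hinj, hadj⟩
    refine ⟨⟨(Fin.snoc_injective_iff.1 hinj).1, fun k hk => ?_⟩, ?_⟩
    · obtain ⟨s, hs, h⟩ := hadj k.castSucc hk
      obtain ⟨s, rfl⟩ := Fin.exists_castSucc_eq.2 (hs.trans (Fin.castSucc_lt_last k)).ne
      exact ⟨s, Fin.castSucc_lt_castSucc_iff.1 hs, by simpa using h⟩
    · obtain ⟨s, hs, h⟩ := hadj (Fin.last _) (by simp)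
      obtain ⟨s, rfl⟩ := Fin.exists_castSucc_eq.2 hs.ne
      exact ⟨s, by simpa using h⟩
  · rintro ⟨hx, j, hj⟩
    refine ⟨Fin.snoc_injective_iff.2 ⟨hx.1, hwx⟩, fun t ht => ?_⟩
    rcases Fin.eq_castSucc_or_eq_last t with ⟨k, rfl⟩ | rfl
    · obtain ⟨s, hs, h⟩ := hx.2 k (by simpa using ht)
      exact ⟨s.castSucc, Fin.castSucc_lt_castSucc_iff.2 hs, by simpa using h⟩
    · exact ⟨j.castSucc, Fin.castSucc_lt_last j, by simpa using hj⟩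

theorem notMem_range_comp (f : V' ↪ V) (hf : Set.range f = {w}ᶜ) (v : Fin N → V') :
    w ∉ Set.range (f ∘ v) := by
  rintro ⟨k, hk⟩
  exact (hf ▸ Set.mem_range_self (v k) : f (v k) ∈ ({w}ᶜ : Set V)) hk

-- If `w` comes first, its neighbour must come second: hence `max i 1`.
theorem rwlPosCount_pendant [Finite V'] (f : G' ↪g G) (hf : Set.range f = {w}ᶜ) {u : V'}
    (hw : ∀ x, G.Adj w x ↔ x = f u) (i : Fin (N + 2)) :
    rwlPosCount G (N + 2) w i =
      ∑ j : Fin (N + 1),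
        if (j : ℕ) < max (i : ℕ) 1 then rwlPosCount G' (N + 1) u j else 0 := by
  have key (v : Fin (N + 1) → V') : IsRWLPrefix G (i.insertNth w (f ∘ v)) ↔
      IsRWLPrefix G' v ∧ ∃ j : Fin (N + 1), (j : ℕ) < max (i : ℕ) 1 ∧ v j = u := by
    constructor
    · intro h
      obtain ⟨h, j, hj, hvj⟩ := h.of_insertNth_pendant hw
      exact ⟨(isRWLPrefix_comp_iff f).1 h, j, hj, f.injective hvj⟩
    · rintro ⟨h, j, hj, rfl⟩
      exact ((isRWLPrefix_comp_iff f).2 h).insertNth_pendant hw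
        (notMem_range_comp f.toEmbedding hf v) hj rfl
  rw [rwlPosCount_eq_card_insertNth f.toEmbedding hf i]
  simp_rw [RelEmbedding.coe_toEmbedding, key]
  rw [card_subtype_eq_sum_of_existsUnique (fun j (v : Fin (N + 1) → V') => v j = u)
    fun v ⟨hv, j, _, hvj⟩ => ⟨j, hvj, fun j' hj' => hv.1 (hj'.trans hvj.symm)⟩]
  refine sum_congr rfl fun j _ => ?_
  split_ifs with hj
  · exact Nat.card_congr <| Equiv.subtypeEquivRight fun v =>
      ⟨fun h => ⟨h.1.1, h.2⟩, fun h => ⟨⟨h.1, j, hj, h.2⟩, h.2⟩⟩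
  · exact Nat.card_eq_zero.2 <| .inl
      ⟨fun ⟨v, ⟨hv, j', hj', hvj'⟩, hvj⟩ => hj (hv.1 (hvj'.trans hvj.symm) ▸ hj')⟩

theorem rwlPosCount_pendant_eq_mul [Finite V'] (f : G' ↪g G) (hf : Set.range f = {w}ᶜ)
    {u : V'} (hw : ∀ x, G.Adj w x ↔ x = f u) {C : ℕ} {s : ℕ → ℕ}
    (hs : ∀ j, rwlPosCount G' (N + 1) u j = C * s j) (i : Fin (N + 2)) :
    rwlPosCount G (N + 2) w i = C * ∑ j ∈ range (max (i : ℕ) 1), s j := by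
  simp_rw [rwlPosCount_pendant f hf hw, hs]
  rw [Fin.sum_univ_eq_sum_range (fun j => if j < max (i : ℕ) 1 then C * s j else 0),
    ← sum_filter, mul_sum]
  congr 1
  ext j
  simp only [mem_filter, mem_range]
  omega

theorem rwlPosCount_last [Fintype V'] (f : G' ↪g G) (hf : Set.range f = {w}ᶜ)
    (hN : Fintype.card V' = N + 1) (hw : ∃ x, G.Adj w x) :
    rwlPosCount G (N + 2) w (Fin.last _) = rwlCount G' := by
  rw [rwlPosCount_eq_card_insertNth f.toEmbedding hf, rwlCount, hN, rwlPrefixCount]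
  refine Nat.card_congr <| Equiv.subtypeEquivRight fun v => ?_
  rw [Fin.insertNth_last', isRWLPrefix_snoc_iff (notMem_range_comp f.toEmbedding hf v),
    RelEmbedding.coe_toEmbedding, isRWLPrefix_comp_iff, and_iff_left_iff_imp]
  intro hv
  obtain ⟨x, hx⟩ := hw
  obtain ⟨y, rfl⟩ : x ∈ Set.range f := hf ▸ hx.ne'
  have hbij : Bijective v := (Fintype.bijective_iff_injective_and_card v).2 ⟨hv.1, by simp [hN]⟩
  obtain ⟨j, rfl⟩ := hbij.2 y
  exact ⟨j, hx.symm⟩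

end Deletion

section BridgeJoin

variable {V W W' : Type*} {G : SimpleGraph V} {H : SimpleGraph W} {H' : SimpleGraph W'}
  {a : V} {b : W}

@[simp]
theorem bridgeJoin_adj_inl_inl {x y : V} :
    (bridgeJoin G H a b).Adj (.inl x) (.inl y) ↔ G.Adj x y := by
  simpa [bridgeJoin, G.adj_comm y x] using G.ne_of_adj

@[simp]
theorem bridgeJoin_adj_inr_inr {x y : W} :
    (bridgeJoin G H a b).Adj (.inr x) (.inr y) ↔ H.Adj x y := by
  simpa [bridgeJoin, H.adj_comm y x] using H.ne_of_adj

@[simp]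
theorem bridgeJoin_adj_inl_inr {x : V} {y : W} :
    (bridgeJoin G H a b).Adj (.inl x) (.inr y) ↔ x = a ∧ y = b := by
  simp [bridgeJoin]

@[simp]
theorem bridgeJoin_adj_inr_inl {x : W} {y : V} :
    (bridgeJoin G H a b).Adj (.inr x) (.inl y) ↔ y = a ∧ x = b := by
  simp [bridgeJoin]

@[simps]
def bridgeJoinInl (G : SimpleGraph V) (H : SimpleGraph W) (a : V) (b : W) :
    G ↪g bridgeJoin G H a b where
  toFun := .inl
  inj' := Sum.inl_injective
  map_rel_iff' := bridgeJoin_adj_inl_inl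

@[simps]
def bridgeJoinMapRight (G : SimpleGraph V) (a : V) (g : H' ↪g H) (b : W') :
    bridgeJoin G H' a b ↪g bridgeJoin G H a (g b) where
  toFun := Sum.map id g
  inj' := Sum.map_injective.2 ⟨injective_id, g.injective⟩
  map_rel_iff' := by rintro (x | x) (y | y) <;> simp [g.injective.eq_iff]

end BridgeJoin

@[simps]
def pathGraphCastSucc (n : ℕ) : pathGraph n ↪g pathGraph (n + 1) where
  toFun := Fin.castSucc
  inj' := Fin.castSucc_injective n
  map_rel_iff' := by simp [pathGraph_adj]

section Tail

variable {V : Type*} {G : SimpleGraph V} {a : V}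

theorem range_bridgeJoinInl {W : Type*} [Subsingleton W] (H : SimpleGraph W) (b : W) :
    Set.range (bridgeJoinInl G H a b) = {.inr b}ᶜ := by
  ext (x | x)
  · simp
  · simp [Subsingleton.elim x b]

theorem range_bridgeJoinMapRight_pathGraphCastSucc {n : ℕ} (b : Fin n) :
    Set.range (bridgeJoinMapRight G a (pathGraphCastSucc n) b) = {.inr (Fin.last n)}ᶜ := by
  ext (x | x)
  · simp
  · simp [Fin.exists_castSucc_eq]

theorem bridgeJoin_pathGraph_one_adj_inr {x : V ⊕ Fin 1} :
    (bridgeJoin G (pathGraph 1) a 0).Adj (.inr 0) x ↔ x = .inl a := by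
  rcases x with x | x
  · simp [eq_comm]
  · simp [pathGraph_adj]

theorem bridgeJoin_pathGraph_adj_inr_last {n : ℕ} {x : V ⊕ Fin (n + 2)} :
    (bridgeJoin G (pathGraph (n + 2)) a 0).Adj (.inr (Fin.last (n + 1))) x ↔
      x = .inr (Fin.last n).castSucc := by
  rcases x with x | x
  · simp [Fin.ext_iff]
  · simp only [bridgeJoin_adj_inr_inr, pathGraph_adj, Sum.inr.injEq, Fin.ext_iff, Fin.val_last,
      Fin.val_castSucc]
    omega

end Tail

-- Positions of the free end of a path of `n` vertices attached to a graph with `N` vertices, in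
-- units of the common position count of the attachment vertex (`n = 0`: the vertex itself).
def tailPos (N : ℕ) : ℕ → ℕ → ℕ
  | 0, k => if k < N then 1 else 0
  | n + 1, k => ∑ j ∈ range (max k 1), tailPos N n j

theorem tailPos_apply_zero {N : ℕ} (hN : 0 < N) : ∀ n, tailPos N n 0 = 1
  | 0 => if_pos hN
  | n + 1 => by simp [tailPos, tailPos_apply_zero hN n]

theorem sum_range_tailPos_add_choose {N : ℕ} (hN : 0 < N) :
    ∀ n K, ∑ k ∈ range (K + 1), tailPos N n k + (K + 1 - N).choose (n + 1) =
      ∑ t ∈ range (n + 2), K.choose t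
  | 0, K => by
    have : {k ∈ range (K + 1) | k < N} = range (min (K + 1) N) := by ext; simp
    simp only [tailPos, sum_boole, this, card_range, Nat.cast_id, zero_add, Nat.choose_one_right,
      sum_range_succ, range_zero, sum_empty, Nat.choose_zero_right]
    omega
  | n + 1, K => by
    have h := sum_congr rfl fun k (_ : k ∈ range K) => sum_range_tailPos_add_choose hN n k
    simp only [sum_add_distrib, sum_range_choose_sub_eq_choose_succ hN] at h
    rw [sum_comm] at h
    simp only [sum_range_choose_eq_choose_succ] at h
    rw [sum_range_succ', sum_range_succ' (fun t => K.choose t)]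
    have hmax (k : ℕ) : max (k + 1) 1 = k + 1 := by omega
    simp only [tailPos, hmax, Nat.zero_max, tailPos_apply_zero hN, Nat.choose_zero_right,
      range_one, sum_singleton]
    rw [show n + 1 + 1 = n + 2 from rfl]
    omega

theorem sum_range_tailPos {N : ℕ} (hN : 0 < N) (n : ℕ) :
    ∑ k ∈ range (N + n), tailPos N n k = ∑ t ∈ range (n + 2), (N + n - 1).choose t := by
  obtain ⟨K, hK⟩ : ∃ K, N + n = K + 1 := ⟨N + n - 1, by omega⟩
  have h := sum_range_tailPos_add_choose hN n K
  rwa [show K + 1 - N = n by omega, Nat.choose_eq_zero_of_lt (Nat.lt_succ_self n), add_zero,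
    ← hK, show K = N + n - 1 by omega] at h

section AttachedPath

variable {V : Type*} (G : SimpleGraph V) (a : V)

theorem rwlPosCount_bridgeJoin_pathGraph_last [Finite V] {N C : ℕ}
    (hC : ∀ k : Fin (N + 1), rwlPosCount G (N + 1) a k = C) :
    ∀ (n : ℕ) (i : Fin (N + n + 2)),
      rwlPosCount (bridgeJoin G (pathGraph (n + 1)) a 0) (N + n + 2) (.inr (Fin.last n)) i =
        C * tailPos (N + 1) (n + 1) i
  | 0, i => rwlPosCount_pendant_eq_mul (bridgeJoinInl G _ a 0) (range_bridgeJoinInl _ 0)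
      (fun _ => bridgeJoin_pathGraph_one_adj_inr) (s := tailPos (N + 1) 0)
      (fun j => by simp [hC, tailPos, j.isLt]) i
  | n + 1, i =>
    rwlPosCount_pendant_eq_mul (bridgeJoinMapRight G a (pathGraphCastSucc (n + 1)) 0)
      (range_bridgeJoinMapRight_pathGraphCastSucc 0) (fun _ => bridgeJoin_pathGraph_adj_inr_last)
      (rwlPosCount_bridgeJoin_pathGraph_last hC n) i

theorem rwlCount_bridgeJoin_pathGraph [Fintype V] {N C : ℕ} (hN : Fintype.card V = N)
    (hC : ∀ k : Fin N, rwlPosCount G N a k = C) {n : ℕ} (hn : 0 < n) :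
    rwlCount (bridgeJoin G (pathGraph n) a ⟨0, hn⟩) =
      C * ∑ t ∈ range (n + 2), (N + n - 1).choose t := by
  obtain ⟨N, rfl⟩ : ∃ N', N = N' + 1 :=
    ⟨N - 1, by have := Fintype.card_pos_iff.2 ⟨a⟩; omega⟩
  obtain ⟨n, rfl⟩ : ∃ n', n = n' + 1 := ⟨n - 1, by omega⟩
  have hcard : Fintype.card (V ⊕ Fin (n + 1)) = N + n + 2 := by
    simp only [Fintype.card_sum, hN, Fintype.card_fin]
    ring
  rw [show (⟨0, hn⟩ : Fin (n + 1)) = 0 from rfl,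
    rwlCount_eq_sum_rwlPosCount hcard (.inr (Fin.last n))]
  simp_rw [rwlPosCount_bridgeJoin_pathGraph_last G a hC n]
  rw [← mul_sum, Fin.sum_univ_eq_sum_range (fun k => tailPos (N + 1) (n + 1) k),
    show N + n + 2 = N + 1 + (n + 1) by ring, sum_range_tailPos N.succ_pos]

end AttachedPath

theorem cycleGraph_adj_castSucc {n : ℕ} {u v : Fin (n + 1)} :
    (cycleGraph (n + 2)).Adj u.castSucc v.castSucc ↔ (pathGraph (n + 1)).Adj u v := by
  rw [cycleGraph_adj', pathGraph_adj]
  have hu := u.isLt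
  have hv := v.isLt
  rcases lt_trichotomy u v with h | rfl | h
  · have h' : u.castSucc < v.castSucc := Fin.castSucc_lt_castSucc_iff.2 h
    rw [Fin.coe_sub_iff_lt.2 h', Fin.sub_val_of_le h'.le]
    simp only [Fin.val_castSucc]
    omega
  · simp
  · have h' : v.castSucc < u.castSucc := Fin.castSucc_lt_castSucc_iff.2 h
    rw [Fin.coe_sub_iff_lt.2 h', Fin.sub_val_of_le h'.le]
    simp only [Fin.val_castSucc]
    omega

def cycleGraphRotate (m : ℕ) [NeZero m] (r : Fin m) : cycleGraph m ≃g cycleGraph m where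
  toEquiv := Equiv.addRight r
  map_rel_iff' := by simp [cycleGraph_adj']

@[simps]
def bridgeJoinPathGraphToCycleGraph (n : ℕ) :
    bridgeJoin (pathGraph 1) (pathGraph (n + 1)) 0 0 ↪g cycleGraph (n + 3) where
  toFun x := (Sum.elim (fun _ => 0) Fin.succ x : Fin (n + 2)).castSucc
  inj' := by
    rintro (x | x) (y | y) h <;> replace h := Fin.castSucc_injective _ h
    · rw [Subsingleton.elim x y]
    · exact absurd h (Fin.succ_ne_zero y).symm
    · exact absurd h (Fin.succ_ne_zero x)
    · exact congrArg _ (Fin.succ_injective _ h)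
  map_rel_iff' := by
    intro x y
    change (cycleGraph (n + 3)).Adj (Fin.castSucc _) (Fin.castSucc _) ↔ _
    rw [cycleGraph_adj_castSucc]
    rcases x with x | x <;> rcases y with y | y <;> simp [pathGraph_adj, Fin.fin_one_eq_zero]

theorem range_bridgeJoinPathGraphToCycleGraph (n : ℕ) :
    Set.range (bridgeJoinPathGraphToCycleGraph n) = {Fin.last (n + 2)}ᶜ := by
  ext x
  simp only [Set.mem_range, Set.mem_compl_singleton_iff, bridgeJoinPathGraphToCycleGraph_apply]
  constructor
  · rintro ⟨y, rfl⟩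
    exact Fin.castSucc_ne_last _
  · intro hx
    obtain ⟨y, rfl⟩ := Fin.exists_castSucc_eq.2 hx
    induction y using Fin.cases with
    | zero => exact ⟨.inl 0, rfl⟩
    | succ j => exact ⟨.inr j, rfl⟩

theorem rwlPosCount_pathGraph_one (k : Fin 1) : rwlPosCount (pathGraph 1) 1 0 k = 1 :=
  Nat.card_eq_one_iff_unique.2 ⟨inferInstance,
    ⟨⟨fun _ => 0, ⟨injective_of_subsingleton _, fun i hi => absurd (Fin.val_eq_zero i) hi⟩,
      Subsingleton.elim _ _⟩⟩⟩

theorem rwlPosCount_cycleGraph_eq {m : ℕ} [NeZero m] (c c' i : Fin m) :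
    rwlPosCount (cycleGraph m) m c i = rwlPosCount (cycleGraph m) m c' i := by
  rw [rwlPosCount_congr (cycleGraphRotate m (c' - c))]
  exact congrArg (rwlPosCount _ m · i) (add_sub_cancel c c')

theorem rwlPosCount_cycleGraph_last_last (M : ℕ) :
    rwlPosCount (cycleGraph (M + 3)) (M + 3) (Fin.last _) (Fin.last _) = 2 ^ (M + 1) := by
  rw [rwlPosCount_last (bridgeJoinPathGraphToCycleGraph M)
    (range_bridgeJoinPathGraphToCycleGraph M) (by simp [add_comm])
    ⟨0, by simp [cycleGraph_adj]⟩]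
  refine (rwlCount_bridgeJoin_pathGraph (pathGraph 1) 0 (Fintype.card_fin 1)
    rwlPosCount_pathGraph_one (n := M + 1) M.succ_pos).trans ?_
  rw [one_mul, show 1 + (M + 1) - 1 = M + 1 by omega, sum_range_succ, Nat.sum_range_choose,
    Nat.choose_eq_zero_of_lt (by omega), add_zero]

theorem rwlPosCount_cycleGraph (M : ℕ) (c i : Fin (M + 3)) :
    rwlPosCount (cycleGraph (M + 3)) (M + 3) c i = 2 ^ (M + 1) := by
  have hsum (i : Fin (M + 3)) : rwlPrefixCount (cycleGraph (M + 3)) (M + 3) =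
      (M + 3) * rwlPosCount (cycleGraph (M + 3)) (M + 3) (Fin.last _) i := by
    simp [rwlPrefixCount_eq_sum_rwlPosCount i, rwlPosCount_cycleGraph_eq _ (Fin.last _) i]
  rw [rwlPosCount_cycleGraph_eq c (Fin.last _) i, ← rwlPosCount_cycleGraph_last_last M]
  exact Nat.eq_of_mul_eq_mul_left (by omega) ((hsum i).symm.trans (hsum _))

theorem rwlCount_tadpole (m n : ℕ) (hm : 3 ≤ m) (hn : 1 ≤ n) :
    rwlCount (bridgeJoin (SimpleGraph.cycleGraph m) (SimpleGraph.pathGraph n)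
        ⟨0, by omega⟩ ⟨0, hn⟩) =
      2 ^ (m - 2) *
        (Nat.choose (m + n) (n + 1) +
          ∑ k ∈ Finset.range n, Nat.choose (m + n - 1) (k + m)) := by
  obtain ⟨M, rfl⟩ : ∃ M, m = M + 3 := ⟨m - 3, by omega⟩
  rw [rwlCount_bridgeJoin_pathGraph _ _ (Fintype.card_fin _) (rwlPosCount_cycleGraph M _) hn,
    sum_range_choose_eq_choose_add_sum (by omega)]
  rfl
end

section
/- For m ≥ 1, the number of random walk labelings of the friendship graph F_m satisfies (2m-1)\,L(F_m) = (4m-1)\,(2m)! (equivalently L(F_m) = (4m-1)(2m)!/(2m-1)). -/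
open Finset

/-- The one-point union `C_n^(m)` of `m` cycle graphs `C_n`: `m` disjoint copies of the
cycle on `n` vertices with one vertex of each copy identified into a single common
vertex `none`.  The `i`-th copy consists of the hub together with the inner vertices
`(i, 0), …, (i, n-2)`, which form a path whose two ends are joined to the hub. -/
def cycleUnion (m n : ℕ) : SimpleGraph (Option (Fin m × Fin (n - 1))) :=
  SimpleGraph.fromRel (fun x y =>
    match x, y with
    | none, some (_, j) => j.val = 0 ∨ j.val = n - 2
    | some (i, j), some (i', j') => i = i' ∧ j.val + 1 = j'.val
    | _, _ => False)

/-- The friendship graph `F_m`: the one-point union of `m` triangles. -/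
def friendshipGraph (m : ℕ) : SimpleGraph (Option (Fin m × Fin 2)) :=
  cycleUnion m 3

/-!
The hub `none` of `F_m` is adjacent to every other vertex. Hence an ordering of the vertices is a
random walk labeling exactly when the vertices preceding the hub form a random walk labeling
prefix of `F_m` minus the hub, the vertices after it being arbitrary; this gives
`L(G) = ∑ₚ L_p(G - u) (|V| - 1 - p)!` for any vertex `u` adjacent to all others. Here `F_m` minus
the hub is the perfect matching `m K₂`, whose prefix counts are `1, 2m, 2m` and then `0`, so
`L(F_m) = (2m)! + 2m (2m-1)! + 2m (2m-2)!`, and multiplying by `2m - 1` gives `(4m - 1) (2m)!`.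
-/
open Function

section RandomWalkLabeling

variable {V : Type*} {G : SimpleGraph V}

theorem IsRWLPrefix.comp_castLE {k K : ℕ} {v : Fin K → V} (hv : IsRWLPrefix G v)
    (hk : k ≤ K) : IsRWLPrefix G (v ∘ Fin.castLE hk) := by
  refine ⟨hv.1.comp (Fin.castLE_injective hk), fun i hi => ?_⟩
  obtain ⟨j, hji, hadj⟩ := hv.2 (Fin.castLE hk i) hi
  exact ⟨⟨j, by simp [Fin.lt_def] at hji; omega⟩, by simpa [Fin.lt_def] using hji, hadj⟩

theorem isRWLPrefix_iff_comp_castLE_of_forall_adj {u : V} (hu : ∀ x ≠ u, G.Adj u x) {K : ℕ}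
    {v : Fin K → V} (hv : Injective v) {p : Fin K} (hp : v p = u) :
    IsRWLPrefix G v ↔ IsRWLPrefix G (v ∘ Fin.castLE p.isLt.le) := by
  refine ⟨fun h => h.comp_castLE _, fun h => ⟨hv, fun i hi => ?_⟩⟩
  rcases lt_trichotomy i p with hip | rfl | hpi
  · obtain ⟨j, hji, hadj⟩ := h.2 ⟨i, hip⟩ hi
    exact ⟨Fin.castLE _ j, hji, hadj⟩
  · refine ⟨⟨0, by omega⟩, by simp [Fin.lt_def]; omega, hp ▸ (hu _ fun h0 => hi ?_).symm⟩
    exact congrArg Fin.val (hv (h0.trans hp.symm)).symm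
  · exact ⟨p, hpi, hp ▸ hu _ fun h => hpi.ne' (hv (h.trans hp.symm))⟩

theorem card_rwlPrefix_snoc (u : V) (p : ℕ) :
    Nat.card {f : Fin (p + 1) → V //
        Injective f ∧ IsRWLPrefix G (Fin.init f) ∧ f (Fin.last p) = u} =
      Nat.card {g : Fin p → V // IsRWLPrefix G g ∧ ∀ i, g i ≠ u} :=
  Nat.card_congr
    { toFun := fun f => ⟨Fin.init f.1, f.2.2.1,
        fun i h => (Fin.castSucc_lt_last i).ne (f.2.1 (h.trans f.2.2.2.symm))⟩
      invFun := fun g => ⟨Fin.snoc g.1 u,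
        Fin.snoc_injective_of_injective g.2.1.1 fun ⟨i, hi⟩ => g.2.2 i hi,
        by rw [Fin.init_snoc]; exact g.2.1, Fin.snoc_last (α := fun _ => V) _ _⟩
      left_inv := fun f => Subtype.ext <| by
        simpa only [f.2.2.2] using Fin.snoc_init_self (α := fun _ => V) f.1
      right_inv := fun g => Subtype.ext (Fin.init_snoc (α := fun _ => V) _ _) }

theorem card_injective_filter_prefix [Fintype V] {k K : ℕ} (hk : k ≤ K)
    (P : (Fin k → V) → Prop) :
    Nat.card {v : Fin K → V // Injective v ∧ P (v ∘ Fin.castLE hk)} =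
      Nat.card {f : Fin k → V // Injective f ∧ P f} *
        (Fintype.card V - k).descFactorial (K - k) := by
  classical
  obtain ⟨n, rfl⟩ := Nat.exists_eq_add_of_le hk
  have hcast : ∀ i : Fin k, Fin.castLE hk i = Fin.castAdd n i := fun _ => rfl
  let toSumEmbedding : {v : Fin (k + n) → V // Injective v ∧ P (v ∘ Fin.castLE hk)} ≃
      {e : Fin k ⊕ Fin n ↪ V // P (e ∘ Sum.inl)} :=
    { toFun := fun v => ⟨⟨v.1 ∘ finSumFinEquiv, v.2.1.comp finSumFinEquiv.injective⟩, v.2.2⟩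
      invFun := fun e => ⟨e.1 ∘ finSumFinEquiv.symm,
        e.1.injective.comp finSumFinEquiv.symm.injective,
        by simpa [Function.comp_def, hcast] using e.2⟩
      left_inv := fun v => by ext; simp
      right_inv := fun e => by ext; simp }
  -- the suffix is an injective tuple in the complement of the range of the prefix
  let splitPrefix : {e : Fin k ⊕ Fin n ↪ V // P (e ∘ Sum.inl)} ≃
      Σ f : {f : Fin k ↪ V // P f}, Fin n ↪ ↥(Set.range f.1)ᶜ :=
    (Equiv.sumEmbeddingEquivSigmaEmbeddingRestricted.subtypeEquiv fun _ => Iff.rfl).trans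
      (Equiv.subtypeSigmaEquiv (fun f : Fin k ↪ V => Fin n ↪ ↥(Set.range f)ᶜ) fun f => P f)
  have hfiber : ∀ f : {f : Fin k ↪ V // P f},
      Nat.card (Fin n ↪ ↥(Set.range f.1)ᶜ) = (Fintype.card V - k).descFactorial n := by
    intro f
    rw [Nat.card_eq_fintype_card, Fintype.card_embedding_eq, Fintype.card_compl_set,
      Set.card_range_of_injective f.1.injective, Fintype.card_fin, Fintype.card_fin]
  have hbase :
      Nat.card {f : Fin k ↪ V // P f} = Nat.card {f : Fin k → V // Injective f ∧ P f} :=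
    Nat.card_congr
      { toFun := fun f => ⟨f.1, f.1.injective, f.2⟩
        invFun := fun f => ⟨⟨f.1, f.2.1⟩, f.2.2⟩
        left_inv := fun _ => rfl
        right_inv := fun _ => rfl }
  rw [Nat.card_congr (toSumEmbedding.trans splitPrefix), Nat.card_sigma,
    Finset.sum_congr rfl fun f _ => hfiber f,
    Finset.sum_const, Finset.card_univ, smul_eq_mul, ← Nat.card_eq_fintype_card, hbase,
    Nat.add_sub_cancel_left]

theorem rwlCount_eq_sum_card_apply_eq [Fintype V] (u : V) :
    rwlCount G = ∑ p : Fin (Fintype.card V),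
      Nat.card {v : Fin (Fintype.card V) → V // IsRWLPrefix G v ∧ v p = u} := by
  classical
  -- a labeling lists every vertex exactly once, so it is classified by the position of `u`
  have hbij (v : {v : Fin (Fintype.card V) → V // IsRWLPrefix G v}) : Bijective v.1 :=
    (Fintype.bijective_iff_injective_and_card _).2 ⟨v.2.1, Fintype.card_fin _⟩
  let pos v : Fin (Fintype.card V) := (Equiv.ofBijective _ (hbij v)).symm u
  rw [rwlCount, rwlPrefixCount, ← Nat.card_congr (Equiv.sigmaFiberEquiv pos), Nat.card_sigma]
  refine Finset.sum_congr rfl fun p _ => Nat.card_congr ?_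
  exact (Equiv.subtypeEquivRight fun v => (Equiv.symm_apply_eq _).trans eq_comm).trans
    (Equiv.subtypeSubtypeEquivSubtypeInter _ fun v : Fin (Fintype.card V) → V => v p = u)

theorem rwlCount_eq_sum_of_forall_adj [Fintype V] {u : V} (hu : ∀ x ≠ u, G.Adj u x) :
    rwlCount G = ∑ p ∈ Finset.range (Fintype.card V),
      Nat.card {g : Fin p → V // IsRWLPrefix G g ∧ ∀ i, g i ≠ u} *
        (Fintype.card V - 1 - p).factorial := by
  rw [rwlCount_eq_sum_card_apply_eq u, ← Fin.sum_univ_eq_sum_range]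
  refine Finset.sum_congr rfl fun p _ => ?_
  have hprefix (v : Fin (Fintype.card V) → V) : IsRWLPrefix G v ∧ v p = u ↔
      Injective v ∧ (IsRWLPrefix G (Fin.init (v ∘ Fin.castLE p.isLt)) ∧
        (v ∘ Fin.castLE p.isLt) (Fin.last p) = u) :=
    ⟨fun ⟨h, hp⟩ => ⟨h.1, h.comp_castLE p.isLt.le, hp⟩, fun ⟨hinj, h, hp⟩ =>
      ⟨(isRWLPrefix_iff_comp_castLE_of_forall_adj hu hinj hp).2 h, hp⟩⟩
  rw [Nat.card_congr (Equiv.subtypeEquivRight hprefix),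
    card_injective_filter_prefix p.isLt fun f => IsRWLPrefix G (Fin.init f) ∧ f (Fin.last p) = u,
    card_rwlPrefix_snoc, Nat.descFactorial_self, Nat.sub_sub, Nat.add_comm 1]

theorem isRWLPrefix_comap_iff {W : Type*} {f : W → V} (hf : Injective f) {k : ℕ}
    {g : Fin k → W} : IsRWLPrefix (G.comap f) g ↔ IsRWLPrefix G (f ∘ g) := by
  simp only [IsRWLPrefix, hf.of_comp_iff, SimpleGraph.comap_adj, Function.comp_apply]

theorem card_rwlPrefix_ne_none {W : Type*} (G : SimpleGraph (Option W)) (p : ℕ) :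
    Nat.card {g : Fin p → Option W // IsRWLPrefix G g ∧ ∀ i, g i ≠ none} =
      rwlPrefixCount (G.comap some) p := by
  refine (Nat.card_congr (Equiv.ofBijective
    (fun g => ⟨some ∘ g.1, (isRWLPrefix_comap_iff (Option.some_injective W)).1 g.2,
      fun i => Option.some_ne_none _⟩) ⟨fun g g' h => ?_, fun g => ?_⟩)).symm
  · exact Subtype.ext ((Option.some_injective W).comp_left (congrArg Subtype.val h))
  · obtain ⟨g, hg, hne⟩ := g
    choose h hh using fun i => Option.ne_none_iff_exists'.1 (hne i)
    obtain rfl : g = some ∘ h := funext hh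
    exact ⟨⟨h, (isRWLPrefix_comap_iff (Option.some_injective W)).2 hg⟩, rfl⟩

theorem rwlPrefixCount_zero : rwlPrefixCount G 0 = 1 :=
  Nat.card_eq_one_iff_unique.2
    ⟨inferInstance, ⟨⟨finZeroElim, fun i => i.elim0, fun i => i.elim0⟩⟩⟩

theorem rwlPrefixCount_one : rwlPrefixCount G 1 = Nat.card V :=
  Nat.card_congr
    { toFun := fun v => v.1 0
      invFun := fun x => ⟨fun _ => x, fun _ _ _ => Subsingleton.elim _ _,
        fun i hi => absurd (Fin.val_eq_zero i) hi⟩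
      left_inv := fun v => Subtype.ext (funext fun i => congrArg v.1 (Subsingleton.elim 0 i))
      right_inv := fun _ => rfl }

theorem rwlPrefixCount_two : rwlPrefixCount G 2 = Nat.card G.Dart :=
  Nat.card_congr
    { toFun := fun v => ⟨(v.1 0, v.1 1), by
        obtain ⟨j, hj, hadj⟩ := v.2.2 1 one_ne_zero
        rwa [(Fin.lt_one_iff _).1 hj] at hadj⟩
      invFun := fun d => ⟨![d.fst, d.snd], by
        refine ⟨fun i j h => ?_, fun i hi => ?_⟩
        · fin_cases i <;> fin_cases j <;> simp_all [d.fst_ne_snd, d.snd_ne_fst]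
        · obtain rfl : i = 1 := by fin_cases i <;> simp_all
          exact ⟨0, Fin.zero_lt_one, d.adj⟩⟩
      left_inv := fun v => Subtype.ext (funext fun i => by fin_cases i <;> rfl)
      right_inv := fun _ => rfl }

theorem rwlPrefixCount_eq_zero (hG : ∀ x y z, G.Adj x y → G.Adj x z → y = z) {k : ℕ}
    (hk : 3 ≤ k) : rwlPrefixCount G k = 0 := by
  have h₀ : 0 < k := by omega
  have h₁ : 1 < k := by omega
  refine @Nat.card_of_isEmpty _ ⟨fun ⟨v, hinj, hadj⟩ => ?_⟩
  obtain ⟨j₁, hj₁, h₀₁⟩ := hadj ⟨1, h₁⟩ one_ne_zero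
  obtain rfl : j₁ = ⟨0, h₀⟩ := Fin.ext (by simp [Fin.lt_def] at hj₁; omega)
  obtain ⟨j₂, hj₂, h₂⟩ := hadj ⟨2, hk⟩ two_ne_zero
  obtain rfl | rfl : j₂ = ⟨0, h₀⟩ ∨ j₂ = ⟨1, h₁⟩ := by
    simp only [Fin.ext_iff, Fin.lt_def] at hj₂ ⊢; omega
  · simpa using hinj (hG _ _ _ h₀₁ h₂)
  · simpa using hinj (hG _ _ _ h₀₁.symm h₂)

theorem card_dart_of_existsUnique_adj (hG : ∀ x, ∃! y, G.Adj x y) :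
    Nat.card G.Dart = Nat.card V := by
  refine Nat.card_congr
    (Equiv.ofBijective (fun d : G.Dart => d.fst) ⟨fun d d' h => ?_, fun x => ?_⟩)
  · refine SimpleGraph.Dart.ext _ _ (Prod.ext h ((hG _).unique d.adj ?_))
    rw [show d.fst = d'.fst from h]
    exact d'.adj
  · obtain ⟨y, hy, -⟩ := hG x
    exact ⟨⟨(x, y), hy⟩, rfl⟩

end RandomWalkLabeling

theorem friendshipGraph_adj_none_some (m : ℕ) (b : Fin m × Fin 2) :
    (friendshipGraph m).Adj none (some b) := by
  simp [friendshipGraph, cycleUnion, SimpleGraph.fromRel_adj]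
  omega

theorem friendshipGraph_adj_some_some {m : ℕ} {x y : Fin m × Fin 2} :
    (friendshipGraph m).Adj (some x) (some y) ↔ x.1 = y.1 ∧ x.2 ≠ y.2 := by
  obtain ⟨i, a⟩ := x
  obtain ⟨j, b⟩ := y
  fin_cases a <;> fin_cases b <;>
    simp [friendshipGraph, cycleUnion, SimpleGraph.fromRel_adj, eq_comm]

theorem existsUnique_friendshipGraph_comap_some_adj (m : ℕ) (x : Fin m × Fin 2) :
    ∃! y, ((friendshipGraph m).comap some).Adj x y := by
  have hpartner : ∀ a b : Fin 2, a ≠ b ↔ b = a + 1 := by decide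
  refine ⟨(x.1, x.2 + 1), ?_, fun y hy => ?_⟩ <;>
    simp only [SimpleGraph.comap_adj, friendshipGraph_adj_some_some, hpartner] at *
  · simp
  · exact Prod.ext hy.1.symm hy.2

theorem rwlCount_friendshipGraph_succ (n : ℕ) :
    rwlCount (friendshipGraph (n + 1)) =
      (2 * n + 2).factorial + (2 * n + 2) * (2 * n + 1).factorial +
        (2 * n + 2) * (2 * n).factorial := by
  have hpartner := existsUnique_friendshipGraph_comap_some_adj (n + 1)
  have hB : Nat.card (Fin (n + 1) × Fin 2) = 2 * n + 2 := by simp; ring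
  have hL₁ : rwlPrefixCount ((friendshipGraph (n + 1)).comap some) 1 = 2 * n + 2 := by
    rw [rwlPrefixCount_one, hB]
  have hL₂ : rwlPrefixCount ((friendshipGraph (n + 1)).comap some) 2 = 2 * n + 2 := by
    rw [rwlPrefixCount_two, card_dart_of_existsUnique_adj hpartner, hB]
  have hL : ∀ k, rwlPrefixCount ((friendshipGraph (n + 1)).comap some) (k + 3) = 0 :=
    fun k => rwlPrefixCount_eq_zero (fun x _ _ hy hz => (hpartner x).unique hy hz) (by omega)
  have hcard : Fintype.card (Option (Fin (n + 1) × Fin 2)) = 2 * n + 3 := by simp; ring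
  rw [rwlCount_eq_sum_of_forall_adj (u := none) ?_]
  · simp only [card_rwlPrefix_ne_none, hcard, Finset.sum_range_succ', hL, zero_mul,
      Finset.sum_const_zero]
    norm_num [rwlPrefixCount_zero, hL₁, hL₂]
    ring
  · rintro (_ | b) h
    · exact absurd rfl h
    · exact friendshipGraph_adj_none_some _ b

theorem rwlCount_friendshipGraph_general (m : ℕ) :
    (2 * m - 1) * rwlCount (friendshipGraph m) = (4 * m - 1) * (2 * m).factorial := by
  rcases m with _ | n
  · simp
  rw [rwlCount_friendshipGraph_succ, show 2 * (n + 1) - 1 = 2 * n + 1 by omega,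
    show 4 * (n + 1) - 1 = 4 * n + 3 by omega, show 2 * (n + 1) = 2 * n + 1 + 1 by ring,
    Nat.factorial_succ (2 * n + 1), Nat.factorial_succ (2 * n)]
  ring

theorem rwlCount_friendshipGraph (m : ℕ) (hm : 1 ≤ m) :
    (2 * m - 1) * rwlCount (friendshipGraph m) = (4 * m - 1) * (2 * m).factorial :=
  rwlCount_friendshipGraph_general m
end
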